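/- Let ψ : ℕ → ℝ⁺ with ψ(n) → ∞, ψ(n)/(log n) → α for some 0 ≤ α < 1. Then the set E_sup(Λ,ψ) = {x ∈ Λ : limsup_{n→∞} (log a_n(x))/ψ(n) = 1} has Hausdorff dimension 0. -/

import Mathlib

open Filter MeasureTheory Set

/-- The Gauss map. -/
noncomputable def gaussMap (x : ℝ) : ℝ := Int.fract x⁻¹

/-- The `n`-th partial quotient (for `n ≥ 1`) of the continued fraction expansion of `x`. -/
noncomputable def cfA (n : ℕ) (x : ℝ) : ℕ := ⌊(gaussMap^[n - 1] x)⁻¹⌋₊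

/-- The set `Λ` of points of `(0,1)` whose partial quotients are non-decreasing. -/
noncomputable def Lam : Set ℝ :=
  {x | x ∈ Set.Ioo (0:ℝ) 1 ∧ ∀ n : ℕ, 1 ≤ n → cfA n x ≤ cfA (n + 1) x}

/-!
For `x` in the set and `b = (1 + α) / 2`, eventually `log aₙ < b⁻¹ ψ(n) < b⁻¹ · b log n`, which
forces `aₙ ≤ n`; and `limsup log aₙ / ψ(n) = 1` with `ψ → ∞` makes `(aₙ)` unbounded, hence, being
non-decreasing, tending to `∞`. So for every `K` the set lies in the countable union over `M` of
the sets `lamSlow K M` on which `K ≤ aₙ ≤ n` for `n ≥ M`. There, level-`n` cylinders are indexed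
by non-decreasing words `a₁ ≤ ⋯ ≤ aₙ ≤ n`, of which there are at most `4ⁿ`, and have diameter
at most `∏ aᵢ⁻² ≤ K^(-2(n - M))`. Hence `μH[d] (lamSlow K M) = 0` as soon as `4 K^(-2d) < 1`, and
letting `K → ∞` gives dimension `0`.
-/

open scoped Topology
open Metric (ediam ediam_empty ediam_le_of_forall_dist_le)

lemma gaussMap_mem_Ico (x : ℝ) : gaussMap x ∈ Ico (0 : ℝ) 1 :=
  ⟨Int.fract_nonneg _, Int.fract_lt_one _⟩

lemma cfA_one (x : ℝ) : cfA 1 x = ⌊x⁻¹⌋₊ := rfl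

lemma cfA_succ_succ (n : ℕ) (x : ℝ) : cfA (n + 2) x = cfA (n + 1) (gaussMap x) := rfl

lemma inv_eq_cfA_one_add_gaussMap {x : ℝ} (hx : 0 < x) : x⁻¹ = cfA 1 x + gaussMap x := by
  rw [cfA_one, gaussMap, Int.fract, natCast_floor_eq_intCast_floor (inv_nonneg.2 hx.le)]
  ring

lemma pos_of_cfA_one_pos {x : ℝ} (h : 0 < cfA 1 x) : 0 < x := by
  rw [cfA_one, Nat.floor_pos] at h
  exact inv_pos.1 (zero_lt_one.trans_le h)

lemma le_inv_cfA_one {x : ℝ} (h : 0 < cfA 1 x) : x ≤ (cfA 1 x : ℝ)⁻¹ := by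
  have hx := pos_of_cfA_one_pos h
  rw [le_inv_comm₀ hx (by exact_mod_cast h), cfA_one]
  exact Nat.floor_le (inv_nonneg.2 hx.le)

lemma abs_sub_eq_mul_abs_sub_gaussMap {x y : ℝ} (hx : 0 < x) (hy : 0 < y)
    (h : cfA 1 x = cfA 1 y) : |x - y| = x * y * |gaussMap x - gaussMap y| := by
  have hgauss : gaussMap x - gaussMap y = x⁻¹ - y⁻¹ := by
    rw [inv_eq_cfA_one_add_gaussMap hx, inv_eq_cfA_one_add_gaussMap hy, h]
    ring
  have hsub : x - y = x * y * (y⁻¹ - x⁻¹) := by field_simp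
  rw [hsub, abs_mul, abs_of_pos (mul_pos hx hy), abs_sub_comm, hgauss]

lemma abs_sub_le_prod_cfA {n : ℕ} {x y : ℝ} (hx : x ∈ Ico (0 : ℝ) 1) (hy : y ∈ Ico (0 : ℝ) 1)
    (hxy : ∀ i < n, cfA (i + 1) x = cfA (i + 1) y) (h1 : ∀ i < n, 1 ≤ cfA (i + 1) x) :
    |x - y| ≤ ∏ i ∈ Finset.range n, ((cfA (i + 1) x : ℝ)⁻¹) ^ 2 := by
  induction n generalizing x y with
  | zero =>
    rw [Finset.prod_range_zero, abs_sub_le_iff]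
    constructor <;> linarith [hx.1, hx.2, hy.1, hy.2]
  | succ n ih =>
    have ha : 0 < cfA 1 x := h1 0 n.succ_pos
    have ha' : 0 < cfA 1 y := hxy 0 n.succ_pos ▸ ha
    have hx0 := pos_of_cfA_one_pos ha
    have hy0 := pos_of_cfA_one_pos ha'
    have htail := ih (gaussMap_mem_Ico x) (gaussMap_mem_Ico y)
      (fun i hi => by simpa only [← cfA_succ_succ] using hxy (i + 1) (by omega))
      (fun i hi => by simpa only [← cfA_succ_succ] using h1 (i + 1) (by omega))
    simp only [← cfA_succ_succ] at htail
    have hxy_le : x * y ≤ (cfA 1 x : ℝ)⁻¹ * (cfA 1 x : ℝ)⁻¹ :=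
      mul_le_mul (le_inv_cfA_one ha) (hxy 0 n.succ_pos ▸ le_inv_cfA_one ha') hy0.le
        (by positivity)
    rw [Finset.prod_range_succ', abs_sub_eq_mul_abs_sub_gaussMap hx0 hy0 (hxy 0 n.succ_pos)]
    calc x * y * |gaussMap x - gaussMap y|
        ≤ (cfA 1 x : ℝ)⁻¹ * (cfA 1 x : ℝ)⁻¹ *
            ∏ i ∈ Finset.range n, ((cfA (i + 2) x : ℝ)⁻¹) ^ 2 :=
          mul_le_mul hxy_le htail (abs_nonneg _) (by positivity)
      _ = _ := by ring

lemma prod_range_le_pow_sub {ρ : ℕ → ℝ} {c : ℝ} {n M : ℕ}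
    (hρ : ∀ i < n, 0 ≤ ρ i ∧ ρ i ≤ 1) (hc : ∀ i < n, M ≤ i → ρ i ≤ c) :
    ∏ i ∈ Finset.range n, ρ i ≤ c ^ (n - M) := by
  calc ∏ i ∈ Finset.range n, ρ i ≤ ∏ i ∈ Finset.Ico M n, ρ i :=
        Finset.prod_le_prod_of_subset_of_le_one (fun i hi => by simp at hi ⊢; omega)
          (fun i hi => (hρ i (Finset.mem_range.1 hi)).1)
          (fun i hi _ => (hρ i (Finset.mem_range.1 hi)).2)
    _ ≤ ∏ _i ∈ Finset.Ico M n, c :=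
        Finset.prod_le_prod (fun i hi => (hρ i (by simp at hi; omega)).1)
          (fun i hi => hc i (by simp at hi; omega) (by simp at hi; omega))
    _ = c ^ (n - M) := by rw [Finset.prod_const, Nat.card_Ico]

lemma monotoneOn_cfA_of_mem_Lam {x : ℝ} (hx : x ∈ Lam) : MonotoneOn (cfA · x) {n | 1 ≤ n} :=
  monotoneOn_nat_Ici_of_le_succ hx.2

lemma one_le_cfA_of_mem_Lam {x : ℝ} (hx : x ∈ Lam) (n : ℕ) : 1 ≤ cfA n x := by
  have h1 : 1 ≤ cfA 1 x := by
    rw [cfA_one]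
    exact Nat.le_floor (by simpa using (one_lt_inv₀ hx.1.1).2 hx.1.2 |>.le)
  rcases n with _ | n
  · exact h1
  · exact h1.trans (monotoneOn_cfA_of_mem_Lam hx (le_refl 1) (by simp) (by omega))

/-- Non-decreasing words `a₁ ≤ ⋯ ≤ aₙ` are determined by the set `{aᵢ₊₁ + i}`, which lies in
`[0, 2n)` when `aₙ ≤ n`; there are thus at most `4ⁿ` of them. -/
noncomputable def cfCode (n : ℕ) (x : ℝ) : Finset ℕ :=
  Finset.univ.image fun i : Fin n => cfA (i + 1) x + i

lemma strictMono_cfA_add_of_mem_Lam {x : ℝ} (hx : x ∈ Lam) (n : ℕ) :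
    StrictMono fun i : Fin n => cfA (i + 1) x + i := fun i j hij => by
  have hij' : (i : ℕ) < j := hij
  have : cfA (i + 1) x ≤ cfA (j + 1) x :=
    monotoneOn_cfA_of_mem_Lam hx (by simp) (by simp) (by omega)
  show cfA (i + 1) x + i < cfA (j + 1) x + j
  omega

lemma cfA_eq_of_cfCode_eq {n : ℕ} {x y : ℝ} (hx : x ∈ Lam) (hy : y ∈ Lam)
    (h : cfCode n x = cfCode n y) : ∀ i < n, cfA (i + 1) x = cfA (i + 1) y := by
  have hrange : range (fun i : Fin n => cfA (i + 1) x + i) =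
      range (fun i : Fin n => cfA (i + 1) y + i) := by
    simpa [cfCode] using congrArg (fun s : Finset ℕ => (s : Set ℕ)) h
  have hfun := ((strictMono_cfA_add_of_mem_Lam hx n).range_inj
    (strictMono_cfA_add_of_mem_Lam hy n)).1 hrange
  intro i hi
  simpa using congrFun hfun ⟨i, hi⟩

lemma cfCode_subset_range {n : ℕ} {x : ℝ} (hx : x ∈ Lam) (hn : cfA n x ≤ n) :
    cfCode n x ⊆ Finset.range (2 * n) := by
  intro k hk
  obtain ⟨i, -, rfl⟩ := Finset.mem_image.1 hk
  have hi := i.isLt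
  have : cfA (i + 1) x ≤ cfA n x :=
    monotoneOn_cfA_of_mem_Lam hx (by simp) (show 1 ≤ n by omega) (by omega)
  simp only [Finset.mem_range]
  omega

noncomputable def lamSlow (K M : ℕ) : Set ℝ :=
  {x | x ∈ Lam ∧ ∀ n ≥ M, K ≤ cfA n x ∧ cfA n x ≤ n}

lemma abs_sub_le_of_cfCode_eq {K M n : ℕ} {x y : ℝ} (hK : 0 < K) (hx : x ∈ lamSlow K M)
    (hy : y ∈ lamSlow K M) (h : cfCode n x = cfCode n y) :
    |x - y| ≤ ((K : ℝ)⁻¹ ^ 2) ^ (n - M) := by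
  refine (abs_sub_le_prod_cfA ⟨hx.1.1.1.le, hx.1.1.2⟩ ⟨hy.1.1.1.le, hy.1.1.2⟩
    (cfA_eq_of_cfCode_eq hx.1 hy.1 h) (fun i _ => one_le_cfA_of_mem_Lam hx.1 _)).trans
      (prod_range_le_pow_sub (fun i _ => ⟨by positivity, ?_⟩) fun i _ hi => ?_)
  · exact pow_le_one₀ (by positivity)
      (inv_le_one_of_one_le₀ (by exact_mod_cast one_le_cfA_of_mem_Lam hx.1 _))
  · gcongr
    exact_mod_cast (hx.2 (i + 1) (by omega)).1

theorem hausdorffMeasure_lamSlow_eq_zero {d : ℝ} (hd : 0 < d) {K : ℕ} (hK : 2 ≤ K)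
    (hKd : 4 * ((K : ℝ)⁻¹ ^ 2) ^ d < 1) (M : ℕ) : μH[d] (lamSlow K M) = 0 := by
  set q : ℝ := (K : ℝ)⁻¹ ^ 2 with hq
  have hq0 : 0 ≤ q := by positivity
  have hq1 : q < 1 := by
    rw [hq]
    exact pow_lt_one₀ (by positivity) (inv_lt_one_of_one_lt₀ (by exact_mod_cast hK)) two_ne_zero
  let t : ℕ → Finset ℕ → Set ℝ := fun n S => {x | x ∈ lamSlow K M ∧ cfCode n x = S}
  have hdiam : ∀ n S, ediam (t n S) ≤ ENNReal.ofReal (q ^ (n - M)) := fun n S =>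
    ediam_le_of_forall_dist_le fun x hx y hy =>
      abs_sub_le_of_cfCode_eq (by omega) hx.1 hy.1 (hx.2.trans hy.2.symm)
  have hempty : ∀ n ≥ M, ∀ S ∉ (Finset.range (2 * n)).powerset, t n S = ∅ := by
    refine fun n hn S hS => eq_empty_of_forall_notMem fun x hx => hS ?_
    rw [Finset.mem_powerset, ← hx.2]
    exact cfCode_subset_range hx.1.1 (hx.1.2 n hn).2
  have hsum : ∀ n ≥ M,
      ∑' S, ediam (t n S) ^ d ≤ ENNReal.ofReal (4 ^ M * (4 * q ^ d) ^ (n - M)) := by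
    intro n hn
    rw [tsum_eq_sum (s := (Finset.range (2 * n)).powerset) fun S hS => by
      rw [hempty n hn S hS, ediam_empty, ENNReal.zero_rpow_of_pos hd]]
    calc ∑ S ∈ (Finset.range (2 * n)).powerset, ediam (t n S) ^ d
        ≤ ∑ S ∈ (Finset.range (2 * n)).powerset, ENNReal.ofReal ((q ^ d) ^ (n - M)) := by
          refine Finset.sum_le_sum fun S _ => ?_
          rw [Real.rpow_pow_comm hq0, ← ENNReal.ofReal_rpow_of_nonneg (by positivity) hd.le]
          gcongr
          exact hdiam n S
      _ = ENNReal.ofReal (4 ^ M * (4 * q ^ d) ^ (n - M)) := by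
          rw [Finset.sum_const, Finset.card_powerset, Finset.card_range, nsmul_eq_mul,
            ← ENNReal.ofReal_natCast, ← ENNReal.ofReal_mul (by positivity)]
          congr 1
          rw [mul_pow, ← mul_assoc, ← pow_add, Nat.add_sub_cancel' hn, pow_mul]
          norm_num
  have hlim : Tendsto (fun n => ENNReal.ofReal (4 ^ M * (4 * q ^ d) ^ (n - M))) atTop (𝓝 0) := by
    rw [← ENNReal.ofReal_zero]
    exact ENNReal.tendsto_ofReal (by simpa using ((tendsto_pow_atTop_nhds_zero_of_lt_one
      (by positivity) hKd).comp (tendsto_sub_atTop_nat M)).const_mul (4 ^ M))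
  have hr : Tendsto (fun n => ENNReal.ofReal (q ^ (n - M))) atTop (𝓝 0) := by
    simpa using ENNReal.tendsto_ofReal
      ((tendsto_pow_atTop_nhds_zero_of_lt_one hq0 hq1).comp (tendsto_sub_atTop_nat M))
  refine le_antisymm ?_ zero_le
  calc μH[d] (lamSlow K M) ≤ liminf (fun n => ∑' S, ediam (t n S) ^ d) atTop :=
        Measure.hausdorffMeasure_le_liminf_tsum d _ _ hr t (Eventually.of_forall hdiam)
          (Eventually.of_forall fun n x hx => mem_iUnion.2 ⟨cfCode n x, hx, rfl⟩)
    _ ≤ liminf (fun n => ENNReal.ofReal (4 ^ M * (4 * q ^ d) ^ (n - M))) atTop :=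
        liminf_le_liminf ((eventually_ge_atTop M).mono hsum)
    _ = 0 := hlim.liminf_eq

lemma eventually_lt_log_of_limsup_div_le_one {u ψ : ℕ → ℝ} {α : ℝ}
    (hψ : ∀ᶠ n in atTop, 0 < ψ n) (h0 : 0 ≤ α) (h1 : α < 1)
    (hα : Tendsto (fun n : ℕ => ψ n / Real.log n) atTop (𝓝 α))
    (hu : limsup (fun n => ((u n / ψ n : ℝ) : EReal)) atTop ≤ 1) :
    ∀ᶠ n : ℕ in atTop, u n < Real.log n := by
  set b := (1 + α) / 2 with hb
  have hb0 : 0 < b := by positivity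
  have hu_lt : ∀ᶠ n in atTop, u n / ψ n < b⁻¹ := by
    have hlt : limsup (fun n => ((u n / ψ n : ℝ) : EReal)) atTop < (b⁻¹ : ℝ) :=
      hu.trans_lt (by exact_mod_cast (one_lt_inv₀ hb0).2 (by linarith))
    exact (eventually_lt_of_limsup_lt hlt).mono fun n hn => by exact_mod_cast hn
  filter_upwards [hu_lt, hα.eventually_lt_const (show α < b by linarith), hψ,
    eventually_gt_atTop 1] with n hun hψn hψ0 hn
  have hlog : 0 < Real.log n := Real.log_pos (by exact_mod_cast hn)
  calc u n < b⁻¹ * ψ n := (div_lt_iff₀ hψ0).1 hun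
    _ < b⁻¹ * (b * Real.log n) :=
        mul_lt_mul_of_pos_left ((div_lt_iff₀ hlog).1 hψn) (inv_pos.2 hb0)
    _ = Real.log n := by field_simp

lemma frequently_lt_of_limsup_div_pos {u ψ : ℕ → ℝ} (hψ : Tendsto ψ atTop atTop)
    (hu : 0 < limsup (fun n => ((u n / ψ n : ℝ) : EReal)) atTop) (C : ℝ) :
    ∃ᶠ n in atTop, C < u n := by
  obtain ⟨c, hc0, hc⟩ := EReal.lt_iff_exists_real_btwn.1 hu
  have hc0 : 0 < c := by exact_mod_cast hc0
  refine ((frequently_lt_of_lt_limsup (by isBoundedDefault) hc).and_eventually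
    (hψ.eventually_gt_atTop (max (C / c) 0))).mono fun n ⟨hun, hψn⟩ => ?_
  have hun : c < u n / ψ n := by exact_mod_cast hun
  have hψ0 : 0 < ψ n := (le_max_right _ _).trans_lt hψn
  calc C = c * (C / c) := by field_simp
    _ < c * ψ n := mul_lt_mul_of_pos_left ((le_max_left _ _).trans_lt hψn) hc0
    _ < u n := by rwa [lt_div_iff₀ hψ0] at hun

lemma setOf_limsup_eq_one_subset_iUnion_lamSlow {ψ : ℕ → ℝ} (hψ : Tendsto ψ atTop atTop) {α : ℝ}
    (h0 : 0 ≤ α) (h1 : α < 1) (hα : Tendsto (fun n : ℕ => ψ n / Real.log n) atTop (𝓝 α))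
    (K : ℕ) :
    {x | x ∈ Lam ∧ limsup (fun n : ℕ => ((Real.log (cfA n x) / ψ n : ℝ) : EReal)) atTop = 1}
      ⊆ ⋃ M, lamSlow K M := by
  rintro x ⟨hx, hlim⟩
  have hpos : ∀ n, (0 : ℝ) < cfA n x := fun n => by exact_mod_cast one_le_cfA_of_mem_Lam hx n
  have hupper : ∀ᶠ n : ℕ in atTop, cfA n x ≤ n := by
    filter_upwards [eventually_lt_log_of_limsup_div_le_one (hψ.eventually_gt_atTop 0) h0 h1 hα
      hlim.le, eventually_gt_atTop 0] with n hn hn0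
    exact_mod_cast ((Real.log_lt_log_iff (hpos n) (by exact_mod_cast hn0)).1 hn).le
  have hlower : ∀ᶠ n in atTop, K ≤ cfA n x := by
    have hfreq := (frequently_lt_of_limsup_div_pos hψ (by rw [hlim]; exact zero_lt_one)
      (Real.log K)).and_eventually (eventually_ge_atTop 1)
    obtain ⟨m, hm, hm1⟩ := hfreq.exists
    have hKm : K ≤ cfA m x := by
      by_contra! h
      exact hm.not_ge (Real.log_le_log (hpos m) (by exact_mod_cast h.le))
    exact eventually_atTop.2 ⟨m, fun n hn =>
      hKm.trans (monotoneOn_cfA_of_mem_Lam hx hm1 (show 1 ≤ n by omega) hn)⟩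
  obtain ⟨M, hM⟩ := eventually_atTop.1 (hlower.and hupper)
  exact mem_iUnion.2 ⟨M, hx, hM⟩

lemma exists_four_mul_inv_sq_rpow_lt_one {d : ℝ} (hd : 0 < d) :
    ∃ K : ℕ, 2 ≤ K ∧ 4 * ((K : ℝ)⁻¹ ^ 2) ^ d < 1 := by
  have hlim : Tendsto (fun K : ℕ => 4 * ((K : ℝ)⁻¹ ^ 2) ^ d) atTop (𝓝 0) := by
    have := ((tendsto_inv_atTop_zero.comp tendsto_natCast_atTop_atTop).pow 2).rpow_const
      (Or.inr hd.le) |>.const_mul 4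
    simpa [Real.zero_rpow hd.ne'] using this
  exact ((eventually_ge_atTop 2).and (hlim.eventually_lt_const zero_lt_one)).exists

theorem dimH_Esup_Lam_zero_general (ψ : ℕ → ℝ)
    (hψ : Tendsto ψ atTop atTop) (α : ℝ) (h0 : 0 ≤ α) (h1 : α < 1)
    (hα : Tendsto (fun n : ℕ => ψ n / Real.log n) atTop (nhds α)) :
    dimH {x | x ∈ Lam ∧
        Filter.limsup (fun n : ℕ => ((Real.log (cfA n x) / ψ n : ℝ) : EReal)) atTop =
          (1 : EReal)} = 0 := by
  refine le_antisymm (dimH_le fun d hd => ?_) zero_le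
  by_contra hd0
  have hd0 : (0 : ℝ) < d := by simpa [pos_iff_ne_zero] using hd0
  obtain ⟨K, hK, hKd⟩ := exists_four_mul_inv_sq_rpow_lt_one hd0
  have hnull := measure_mono_null (setOf_limsup_eq_one_subset_iUnion_lamSlow hψ h0 h1 hα K)
    (measure_iUnion_null fun M => hausdorffMeasure_lamSlow_eq_zero hd0 hK hKd M)
  simp [hnull] at hd

/-- If `ψ(n) → ∞` and `ψ(n)/log n → α` with `0 ≤ α < 1`, then `E_sup(Λ,ψ)`
has Hausdorff dimension `0`. -/
theorem dimH_Esup_Lam_zero (ψ : ℕ → ℝ) (hψpos : ∀ n, 0 < ψ n)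
    (hψ : Tendsto ψ atTop atTop) (α : ℝ) (h0 : 0 ≤ α) (h1 : α < 1)
    (hα : Tendsto (fun n : ℕ => ψ n / Real.log n) atTop (nhds α)) :
    dimH {x | x ∈ Lam ∧
        Filter.limsup (fun n : ℕ => ((Real.log (cfA n x) / ψ n : ℝ) : EReal)) atTop =
          (1 : EReal)} = 0 :=
  dimH_Esup_Lam_zero_general ψ hψ α h0 h1 hα
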